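/- arXiv:2103.08241 — 5 statements merged into one kernel-verified Lean document; each statement's English description precedes it below -/
import Mathlib

section
/- Let M be a finite MDP with N states and A actions with nonnegative rewards r(s,a), and let r̄ = max_{s,a} r(s,a). Let π^C be a myopic policy, i.e. a deterministic policy with r(s, π^C(s)) = max_a r(s,a) for every state s, let P_C be its induced transition matrix, and assume τ₁(P_C) < 1. Let w_C be a stationary distribution of P_C and set g^C = Σ_s (w_C)_s · r(s, π^C(s)). Then for every Markov randomized policy π and every stationary distribution w_π of the induced matrix P_π, the gain g_π = Σ_s (w_π)_s (r_π)_s satisfies g_π − g^C ≤ r̄ · ρ(M, P_C) / (1 − τ₁(P_C)). -/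
/-!
Because the myopic policy maximises the immediate reward,
`g_π - g^C ≤ ∑ₛ (w_π - w_C)ₛ r(s, π^C(s)) ≤ r̄ ‖w_π - w_C‖₁`.
The difference `v = w_π - w_C` satisfies `v = v P_C + w_π (P_π - P_C)`. Since `∑ v = 0`,
Dobrushin's contraction gives `‖v P_C‖₁ ≤ τ₁(P_C) ‖v‖₁`, and since every entry of `P_π` lies between
`P̲` and `P̄`, every row of `P_π - P_C` has `ℓ¹`-norm at most `ρ(M, P_C)`. Hence
`‖v‖₁ ≤ τ₁(P_C) ‖v‖₁ + ρ(M, P_C)`.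
-/

/-- Coefficient of ergodicity τ₁ of a row-stochastic matrix. -/
noncomputable def tau1 {N : ℕ} (P : Fin N → Fin N → ℝ) : ℝ :=
  (1 / 2) * ⨆ i, ⨆ j, ∑ k, |P i k - P j k|

/-- ρ(M, Y) for an MDP with transition probabilities `P a i j = P(j | i, a)`. -/
noncomputable def rho {N A : ℕ} (P : Fin A → Fin N → Fin N → ℝ)
    (Y : Fin N → Fin N → ℝ) : ℝ :=
  ⨆ i, ∑ j, (((⨆ a, P a i j) - ⨅ a, P a i j) / 2 +
    |Y i j - ((⨆ a, P a i j) + (⨅ a, P a i j)) / 2|)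

open Finset

section ConvexCombination

variable {α : Type*} [Fintype α] {p x : α → ℝ} {b : ℝ}

lemma sum_mul_le_of_forall_le (hp : ∀ a, 0 ≤ p a) (hp1 : ∑ a, p a = 1) (hx : ∀ a, x a ≤ b) :
    ∑ a, p a * x a ≤ b :=
  calc ∑ a, p a * x a ≤ ∑ a, p a * b :=
        sum_le_sum fun a _ => mul_le_mul_of_nonneg_left (hx a) (hp a)
    _ = b := by rw [← sum_mul, hp1, one_mul]

lemma le_sum_mul_of_forall_le (hp : ∀ a, 0 ≤ p a) (hp1 : ∑ a, p a = 1) (hx : ∀ a, b ≤ x a) :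
    b ≤ ∑ a, p a * x a :=
  calc b = ∑ a, p a * b := by rw [← sum_mul, hp1, one_mul]
    _ ≤ ∑ a, p a * x a := sum_le_sum fun a _ => mul_le_mul_of_nonneg_left (hx a) (hp a)

lemma sum_mul_le_mul_sum_abs {v : α → ℝ} {R : ℝ} (hx0 : ∀ i, 0 ≤ x i) (hxR : ∀ i, x i ≤ R) :
    ∑ i, v i * x i ≤ R * ∑ i, |v i| :=
  calc ∑ i, v i * x i ≤ ∑ i, |v i| * R := sum_le_sum fun i _ =>
        calc v i * x i ≤ |v i| * x i := mul_le_mul_of_nonneg_right (le_abs_self _) (hx0 i)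
          _ ≤ |v i| * R := mul_le_mul_of_nonneg_left (hxR i) (abs_nonneg _)
    _ = R * ∑ i, |v i| := by rw [← sum_mul, mul_comm]

end ConvexCombination

lemma abs_sub_le_half_width_add_abs_sub_midpoint {x y lo hi : ℝ} (hlo : lo ≤ x) (hhi : x ≤ hi) :
    |x - y| ≤ (hi - lo) / 2 + |y - (hi + lo) / 2| := by
  have hmid : |x - (hi + lo) / 2| ≤ (hi - lo) / 2 := abs_le.mpr ⟨by linarith, by linarith⟩
  calc |x - y| ≤ |x - (hi + lo) / 2| + |(hi + lo) / 2 - y| := abs_sub_le _ _ _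
    _ ≤ (hi - lo) / 2 + |y - (hi + lo) / 2| := by rw [abs_sub_comm y]; linarith

lemma sum_abs_sub_le_two_mul_tau1 {N : ℕ} (Q : Fin N → Fin N → ℝ) (i k : Fin N) :
    ∑ j, |Q i j - Q k j| ≤ 2 * tau1 Q := by
  have h := (le_ciSup (Finite.bddAbove_range fun k => ∑ j, |Q i j - Q k j|) k).trans
    (le_ciSup (Finite.bddAbove_range fun i => ⨆ k, ∑ j, |Q i j - Q k j|) i)
  rw [tau1]
  linarith

lemma sum_abs_sum_mul_sub_le_rho {N A : ℕ} (P : Fin A → Fin N → Fin N → ℝ)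
    (Y : Fin N → Fin N → ℝ) {p : Fin A → ℝ} (hp : ∀ a, 0 ≤ p a) (hp1 : ∑ a, p a = 1)
    (i : Fin N) :
    ∑ j, |∑ a, p a * P a i j - Y i j| ≤ rho P Y := by
  calc ∑ j, |∑ a, p a * P a i j - Y i j|
      ≤ ∑ j, (((⨆ a, P a i j) - ⨅ a, P a i j) / 2 +
          |Y i j - ((⨆ a, P a i j) + (⨅ a, P a i j)) / 2|) := sum_le_sum fun j _ =>
        abs_sub_le_half_width_add_abs_sub_midpoint
          (le_sum_mul_of_forall_le hp hp1 fun a =>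
            ciInf_le (Finite.bddBelow_range fun a => P a i j) a)
          (sum_mul_le_of_forall_le hp hp1 fun a =>
            le_ciSup (Finite.bddAbove_range fun a => P a i j) a)
    _ ≤ rho P Y := by
      rw [rho]
      exact le_ciSup (Finite.bddAbove_range fun i => ∑ j, (((⨆ a, P a i j) - ⨅ a, P a i j) / 2 +
        |Y i j - ((⨆ a, P a i j) + (⨅ a, P a i j)) / 2|)) i

section Dobrushin

variable {ι : Type*} [Fintype ι] {t : ℝ}

lemma exists_forall_abs_sub_le_of_forall_sub_le {f : ι → ℝ} (hf : ∀ i k, f i - f k ≤ 2 * t) :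
    ∃ m, ∀ i, |f i - m| ≤ t := by
  cases isEmpty_or_nonempty ι
  · exact ⟨0, fun i => isEmptyElim i⟩
  · obtain ⟨i₀, hi₀⟩ := Finite.exists_max f
    exact ⟨f i₀ - t, fun i => abs_le.mpr ⟨by linarith [hf i₀ i], by linarith [hi₀ i]⟩⟩

lemma sum_mul_le_of_sum_eq_zero {v f : ι → ℝ} (hv : ∑ i, v i = 0)
    (hf : ∀ i k, f i - f k ≤ 2 * t) :
    ∑ i, v i * f i ≤ t * ∑ i, |v i| := by
  obtain ⟨m, hm⟩ := exists_forall_abs_sub_le_of_forall_sub_le hf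
  calc ∑ i, v i * f i = ∑ i, v i * (f i - m) := by
        simp only [mul_sub, sum_sub_distrib, ← sum_mul, hv, zero_mul, sub_zero]
    _ ≤ ∑ i, |v i| * t := sum_le_sum fun i _ =>
        calc v i * (f i - m) ≤ |v i * (f i - m)| := le_abs_self _
          _ = |v i| * |f i - m| := abs_mul _ _
          _ ≤ |v i| * t := mul_le_mul_of_nonneg_left (hm i) (abs_nonneg _)
    _ = t * ∑ i, |v i| := by rw [← sum_mul, mul_comm]

theorem sum_abs_sum_mul_le_of_sum_eq_zero {Q : ι → ι → ℝ}
    (hQ : ∀ i k, ∑ j, |Q i j - Q k j| ≤ 2 * t) {v : ι → ℝ} (hv : ∑ i, v i = 0) :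
    ∑ j, |∑ i, v i * Q i j| ≤ t * ∑ i, |v i| := by
  -- pair `v Q` with its sign vector `s`; the rows of `Q` then enter only through `Q s`
  set s : ι → ℝ := fun j => if 0 ≤ ∑ i, v i * Q i j then 1 else -1 with hs_def
  have hs : ∀ j, |∑ i, v i * Q i j| = s j * ∑ i, v i * Q i j := by
    intro j
    by_cases h : 0 ≤ ∑ i, v i * Q i j
    · simp only [hs_def, if_pos h, one_mul, abs_of_nonneg h]
    · simp only [hs_def, if_neg h, neg_one_mul, abs_of_neg (not_le.mp h)]
  have hs1 : ∀ j, |s j| ≤ 1 := fun j => by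
    by_cases h : 0 ≤ ∑ i, v i * Q i j <;> simp [hs_def, h]
  calc ∑ j, |∑ i, v i * Q i j| = ∑ i, v i * ∑ j, s j * Q i j := by
        simp only [hs, mul_sum]
        rw [sum_comm]
        exact sum_congr rfl fun i _ => sum_congr rfl fun j _ => by ring
    _ ≤ t * ∑ i, |v i| := sum_mul_le_of_sum_eq_zero hv fun i k => ?_
  calc ∑ j, s j * Q i j - ∑ j, s j * Q k j = ∑ j, s j * (Q i j - Q k j) := by
        simp only [mul_sub, sum_sub_distrib]
    _ ≤ ∑ j, |Q i j - Q k j| := sum_le_sum fun j _ =>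
        (le_abs_self _).trans (by rw [abs_mul]; exact mul_le_of_le_one_left (abs_nonneg _) (hs1 j))
    _ ≤ 2 * t := hQ i k

lemma sum_abs_sum_mul_le_of_forall_sum_abs_le {R : ι → ι → ℝ} {ρ : ℝ}
    (hR : ∀ i, ∑ j, |R i j| ≤ ρ) {w : ι → ℝ} (hw0 : ∀ i, 0 ≤ w i) (hw1 : ∑ i, w i = 1) :
    ∑ j, |∑ i, w i * R i j| ≤ ρ :=
  calc ∑ j, |∑ i, w i * R i j| ≤ ∑ j, ∑ i, w i * |R i j| := sum_le_sum fun j _ =>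
        (abs_sum_le_sum_abs _ _).trans_eq
          (sum_congr rfl fun i _ => by rw [abs_mul, abs_of_nonneg (hw0 i)])
    _ = ∑ i, w i * ∑ j, |R i j| := by rw [sum_comm]; simp only [mul_sum]
    _ ≤ ρ := sum_mul_le_of_forall_le hw0 hw1 hR

theorem sum_abs_sub_le_of_stationary {Q Q' : ι → ι → ℝ} {ρ : ℝ}
    (hQ : ∀ i k, ∑ j, |Q i j - Q k j| ≤ 2 * t) (ht : t < 1)
    (hQQ' : ∀ i, ∑ j, |Q' i j - Q i j| ≤ ρ) {w w' : ι → ℝ}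
    (hw1 : ∑ i, w i = 1) (hwQ : ∀ j, ∑ i, w i * Q i j = w j)
    (hw'0 : ∀ i, 0 ≤ w' i) (hw'1 : ∑ i, w' i = 1) (hw'Q' : ∀ j, ∑ i, w' i * Q' i j = w' j) :
    ∑ i, |w' i - w i| ≤ ρ / (1 - t) := by
  have hsum : ∑ i, (w' i - w i) = 0 := by rw [sum_sub_distrib, hw1, hw'1, sub_self]
  have hdecomp : ∀ j, w' j - w j =
      ∑ i, (w' i - w i) * Q i j + ∑ i, w' i * (Q' i j - Q i j) := fun j => by
    conv_lhs => rw [← hwQ j, ← hw'Q' j]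
    rw [← sum_add_distrib, ← sum_sub_distrib]
    exact sum_congr rfl fun i _ => by ring
  have hle : ∑ j, |w' j - w j| ≤ t * ∑ i, |w' i - w i| + ρ :=
    calc ∑ j, |w' j - w j|
        ≤ ∑ j, (|∑ i, (w' i - w i) * Q i j| + |∑ i, w' i * (Q' i j - Q i j)|) :=
          sum_le_sum fun j _ => by rw [hdecomp j]; exact abs_add_le _ _
      _ ≤ t * ∑ i, |w' i - w i| + ρ := by
          rw [sum_add_distrib]
          exact add_le_add (sum_abs_sum_mul_le_of_sum_eq_zero hQ hsum)
            (sum_abs_sum_mul_le_of_forall_sum_abs_le hQQ' hw'0 hw'1)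
  rw [le_div_iff₀ (sub_pos.mpr ht)]
  linarith

end Dobrushin

theorem myopic_gain_gap_bound_general {N A : ℕ}
    (P : Fin A → Fin N → Fin N → ℝ)
    (r : Fin N → Fin A → ℝ)
    (hrnn : ∀ s a, 0 ≤ r s a)
    (rbar : ℝ) (hrbar : rbar = ⨆ s, ⨆ a, r s a)
    (piC : Fin N → Fin A)
    (hmyopic : ∀ s a, r s a ≤ r s (piC s))
    (PC : Fin N → Fin N → ℝ)
    (htau : tau1 PC < 1)
    (wC : Fin N → ℝ) (hwCsum : ∑ s, wC s = 1)
    (hwCstat : ∀ j, ∑ i, wC i * PC i j = wC j)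
    (gC : ℝ) (hgC : gC = ∑ s, wC s * r s (piC s))
    (pol : Fin N → Fin A → ℝ)
    (hpolnn : ∀ s a, 0 ≤ pol s a) (hpolrow : ∀ s, ∑ a, pol s a = 1)
    (Ppol : Fin N → Fin N → ℝ) (hPpol : ∀ i j, Ppol i j = ∑ a, pol i a * P a i j)
    (wpol : Fin N → ℝ) (hwpolnn : ∀ s, 0 ≤ wpol s) (hwpolsum : ∑ s, wpol s = 1)
    (hwpolstat : ∀ j, ∑ i, wpol i * Ppol i j = wpol j)
    (gpol : ℝ) (hgpol : gpol = ∑ s, wpol s * (∑ a, pol s a * r s a)) :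
    gpol - gC ≤ rbar * rho P PC / (1 - tau1 PC) := by
  have hgain : gpol ≤ ∑ s, wpol s * r s (piC s) := hgpol ▸ sum_le_sum fun s _ =>
    mul_le_mul_of_nonneg_left (sum_mul_le_of_forall_le (hpolnn s) (hpolrow s) (hmyopic s))
      (hwpolnn s)
  have hrbar_ge : ∀ s a, r s a ≤ rbar := fun s a => hrbar ▸
    (le_ciSup (Finite.bddAbove_range fun a => r s a) a).trans
      (le_ciSup (Finite.bddAbove_range fun s => ⨆ a, r s a) s)
  have hrbar_nonneg : 0 ≤ rbar := hrbar ▸ Real.iSup_nonneg fun s => Real.iSup_nonneg (hrnn s)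
  have hdist : ∑ s, |wpol s - wC s| ≤ rho P PC / (1 - tau1 PC) :=
    sum_abs_sub_le_of_stationary (sum_abs_sub_le_two_mul_tau1 PC) htau
      (fun i => by simpa only [hPpol] using sum_abs_sum_mul_sub_le_rho P PC (hpolnn i) (hpolrow i) i)
      hwCsum hwCstat hwpolnn hwpolsum hwpolstat
  calc gpol - gC ≤ ∑ s, (wpol s - wC s) * r s (piC s) := by
        rw [hgC]; simp only [sub_mul, sum_sub_distrib]; linarith
    _ ≤ rbar * ∑ s, |wpol s - wC s| :=
        sum_mul_le_mul_sum_abs (fun s => hrnn s _) (fun s => hrbar_ge s _)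
    _ ≤ rbar * (rho P PC / (1 - tau1 PC)) := mul_le_mul_of_nonneg_left hdist hrbar_nonneg
    _ = rbar * rho P PC / (1 - tau1 PC) := (mul_div_assoc _ _ _).symm

/-- The optimal policy outperforms the myopic policy by at most
`r̄ · ρ(M, P_C) / (1 − τ₁(P_C))`. -/
theorem myopic_gain_gap_bound {N A : ℕ} [NeZero N] [NeZero A]
    (P : Fin A → Fin N → Fin N → ℝ)
    (hPnn : ∀ a i j, 0 ≤ P a i j)
    (hProw : ∀ a i, ∑ j, P a i j = 1)
    (r : Fin N → Fin A → ℝ)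
    (hrnn : ∀ s a, 0 ≤ r s a)
    (rbar : ℝ) (hrbar : rbar = ⨆ s, ⨆ a, r s a)
    (piC : Fin N → Fin A)
    (hmyopic : ∀ s a, r s a ≤ r s (piC s))
    (PC : Fin N → Fin N → ℝ) (hPC : ∀ i j, PC i j = P (piC i) i j)
    (htau : tau1 PC < 1)
    (wC : Fin N → ℝ) (hwCnn : ∀ s, 0 ≤ wC s) (hwCsum : ∑ s, wC s = 1)
    (hwCstat : ∀ j, ∑ i, wC i * PC i j = wC j)
    (gC : ℝ) (hgC : gC = ∑ s, wC s * r s (piC s))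
    (pol : Fin N → Fin A → ℝ)
    (hpolnn : ∀ s a, 0 ≤ pol s a) (hpolrow : ∀ s, ∑ a, pol s a = 1)
    (Ppol : Fin N → Fin N → ℝ) (hPpol : ∀ i j, Ppol i j = ∑ a, pol i a * P a i j)
    (wpol : Fin N → ℝ) (hwpolnn : ∀ s, 0 ≤ wpol s) (hwpolsum : ∑ s, wpol s = 1)
    (hwpolstat : ∀ j, ∑ i, wpol i * Ppol i j = wpol j)
    (gpol : ℝ) (hgpol : gpol = ∑ s, wpol s * (∑ a, pol s a * r s a)) :
    gpol - gC ≤ rbar * rho P PC / (1 - tau1 PC) :=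
  myopic_gain_gap_bound_general P r hrnn rbar hrbar piC hmyopic PC htau wC hwCsum hwCstat gC hgC pol
    hpolnn hpolrow Ppol hPpol wpol hwpolnn hwpolsum hwpolstat gpol hgpol
end

section
/- For every row-stochastic N×N real matrix P, the supremum of ‖zᵀP‖₁ over all real row vectors z with ‖z‖₁ = 1 and Σ_i z_i = 0 equals (1/2)·max_{i,j} Σ_k |P_{ik} − P_{jk}|; in particular, for every z with Σ_i z_i = 0 one has ‖zᵀP‖₁ ≤ τ₁(P)·‖z‖₁, and this bound is attained for some z with ‖z‖₁ = 1 and Σ_i z_i = 0. -/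
/-! Write a zero-sum `z` as `z⁺ - z⁻`. Both parts have mass `s = ‖z‖₁ / 2`, and
`s • z = ∑ᵢⱼ z⁺ᵢ z⁻ⱼ (eᵢ - eⱼ)`, so the triangle inequality gives
`s ‖zᵀP‖₁ ≤ ∑ᵢⱼ z⁺ᵢ z⁻ⱼ ‖Pᵢ - Pⱼ‖₁ ≤ s² · maxᵢⱼ ‖Pᵢ - Pⱼ‖₁`. Equality holds for `z = (eᵢ - eⱼ) / 2`
when rows `i ≠ j` are at maximal distance. -/

open Finset

variable {ι κ : Type*} [Fintype κ]

def rowDist (P : ι → κ → ℝ) (i j : ι) : ℝ := ∑ k, |P i k - P j k|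

lemma rowDist_nonneg (P : ι → κ → ℝ) (i j : ι) : 0 ≤ rowDist P i j :=
  sum_nonneg fun _ _ => abs_nonneg _

@[simp]
lemma rowDist_self (P : ι → κ → ℝ) (i : ι) : rowDist P i i = 0 := by
  simp [rowDist]

lemma exists_ne_forall_rowDist_le [Finite ι] [Nontrivial ι] (P : ι → κ → ℝ) :
    ∃ i j, i ≠ j ∧ ∀ i' j', rowDist P i' j' ≤ rowDist P i j := by
  obtain ⟨⟨i, j⟩, hmax⟩ := Finite.exists_max fun p : ι × ι => rowDist P p.1 p.2
  by_cases hij : i = j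
  · -- the maximum is then `0`, so every pair attains it
    obtain ⟨i', j', hne⟩ := exists_pair_ne ι
    refine ⟨i', j', hne, fun k l => ?_⟩
    have h := hmax (k, l)
    simp only [hij, rowDist_self] at h
    exact h.trans (rowDist_nonneg P i' j')
  · exact ⟨i, j, hij, fun i' j' => hmax (i', j')⟩

section ZeroSum

variable [Fintype ι] {z : ι → ℝ}

lemma sum_negPart_eq_sum_posPart (hz : ∑ i, z i = 0) : ∑ i, (z i)⁻ = ∑ i, (z i)⁺ := by
  have h : ∑ i, ((z i)⁺ - (z i)⁻) = 0 := by simpa only [posPart_sub_negPart] using hz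
  rw [sum_sub_distrib] at h
  linarith

lemma sum_abs_eq_two_mul_sum_posPart (hz : ∑ i, z i = 0) :
    ∑ i, |z i| = 2 * ∑ i, (z i)⁺ := by
  simp only [← posPart_add_negPart, sum_add_distrib, sum_negPart_eq_sum_posPart hz]
  ring

lemma sum_posPart_mul_sum_mul_eq (hz : ∑ i, z i = 0) (w : ι → ℝ) :
    (∑ i, (z i)⁺) * ∑ i, z i * w i = ∑ i, ∑ j, (z i)⁺ * (z j)⁻ * (w i - w j) := by
  have hzw : ∑ i, z i * w i = ∑ i, (z i)⁺ * w i - ∑ i, (z i)⁻ * w i := by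
    simp only [← sum_sub_distrib, ← sub_mul, posPart_sub_negPart]
  calc (∑ i, (z i)⁺) * ∑ i, z i * w i
      = (∑ i, (z i)⁺ * w i) * ∑ j, (z j)⁻ - (∑ i, (z i)⁺) * ∑ j, (z j)⁻ * w j := by
        rw [hzw, sum_negPart_eq_sum_posPart hz]
        ring
    _ = ∑ i, ∑ j, (z i)⁺ * (z j)⁻ * (w i - w j) := by
        simp only [sum_mul_sum, ← sum_sub_distrib]
        exact sum_congr rfl fun i _ => sum_congr rfl fun j _ => by ring

lemma sum_abs_sum_mul_le (hz : ∑ i, z i = 0) {P : ι → κ → ℝ} {M : ℝ}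
    (hM : ∀ i j, rowDist P i j ≤ M) :
    ∑ k, |∑ i, z i * P i k| ≤ M / 2 * ∑ i, |z i| := by
  set s := ∑ i, (z i)⁺ with hs
  have hs0 : 0 ≤ s := sum_nonneg fun i _ => posPart_nonneg _
  have hscaled : s * ∑ k, |∑ i, z i * P i k| ≤ s * (s * M) := calc
    s * ∑ k, |∑ i, z i * P i k| = ∑ k, |∑ i, ∑ j, (z i)⁺ * (z j)⁻ * (P i k - P j k)| := by
      rw [mul_sum]
      refine sum_congr rfl fun k _ => ?_
      rw [← sum_posPart_mul_sum_mul_eq hz, abs_mul, abs_of_nonneg hs0]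
    _ ≤ ∑ k, ∑ i, ∑ j, (z i)⁺ * (z j)⁻ * |P i k - P j k| := by
      gcongr with k _
      refine (abs_sum_le_sum_abs _ _).trans (sum_le_sum fun i _ => ?_)
      refine (abs_sum_le_sum_abs _ _).trans_eq (sum_congr rfl fun j _ => ?_)
      rw [abs_mul, abs_of_nonneg (mul_nonneg (posPart_nonneg _) (negPart_nonneg _))]
    _ = ∑ i, ∑ j, (z i)⁺ * (z j)⁻ * rowDist P i j := by
      rw [sum_comm]
      refine sum_congr rfl fun i _ => ?_
      rw [sum_comm]
      simp only [rowDist, mul_sum]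
    _ ≤ ∑ i, ∑ j, (z i)⁺ * (z j)⁻ * M := by
      gcongr with i _ j _
      exact hM i j
    _ = s * (s * M) := by
      simp only [← sum_mul, ← mul_sum, sum_negPart_eq_sum_posPart hz]
      ring
  rcases hs0.eq_or_lt with h0 | hpos
  · have hz0 : ∀ i, z i = 0 := by
      have h := sum_abs_eq_two_mul_sum_posPart hz
      rw [← hs, ← h0, mul_zero, sum_eq_zero_iff_of_nonneg fun i _ => abs_nonneg _] at h
      exact fun i => abs_eq_zero.mp (h i (mem_univ i))
    simp [hz0]
  · rw [sum_abs_eq_two_mul_sum_posPart hz, ← hs]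
    linarith [le_of_mul_le_mul_left hscaled hpos]

lemma exists_sum_abs_eq_one_sum_eq_zero [DecidableEq ι] (P : ι → κ → ℝ) {i j : ι} (hij : i ≠ j) :
    ∃ z : ι → ℝ, ∑ l, |z l| = 1 ∧ ∑ l, z l = 0 ∧
      ∑ k, |∑ l, z l * P l k| = rowDist P i j / 2 := by
  refine ⟨Pi.single i (1 / 2) - Pi.single j (1 / 2), ?_, by simp, ?_⟩
  · rw [Fintype.sum_eq_add i j hij]
    · simp [hij, hij.symm]
      norm_num
    · rintro l ⟨hi, hj⟩
      simp [hi, hj]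
  · have hrow : ∀ k, ∑ l, (Pi.single i (1 / 2) - Pi.single j (1 / 2) : ι → ℝ) l * P l k
        = (P i k - P j k) / 2 := fun k => by
      simp [Pi.single_apply, sub_mul, ite_mul]
      ring
    simp only [hrow, abs_div, abs_two, rowDist, sum_div]

end ZeroSum

lemma tau1_eq_of_forall_rowDist_le {N : ℕ} {P : Fin N → Fin N → ℝ} {i j : Fin N}
    (hmax : ∀ i' j', rowDist P i' j' ≤ rowDist P i j) : tau1 P = rowDist P i j / 2 := by
  have : Nonempty (Fin N) := ⟨i⟩
  have hsup : ⨆ i', ⨆ j', rowDist P i' j' = rowDist P i j :=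
    le_antisymm (ciSup_le fun i' => ciSup_le fun j' => hmax i' j')
      (le_ciSup_of_le (Finite.bddAbove_range _) i (le_ciSup (Finite.bddAbove_range _) j))
  change 1 / 2 * ⨆ i', ⨆ j', rowDist P i' j' = _
  rw [hsup]
  ring

theorem tau1_is_sup_general {N : ℕ} (hN : 2 ≤ N) (P : Fin N → Fin N → ℝ) :
    (∀ z : Fin N → ℝ, ∑ i, z i = 0 →
      ∑ k, |∑ i, z i * P i k| ≤ tau1 P * ∑ i, |z i|) ∧
    (∃ z : Fin N → ℝ, (∑ i, |z i| = 1) ∧ (∑ i, z i = 0) ∧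
      ∑ k, |∑ i, z i * P i k| = tau1 P) := by
  have : Nontrivial (Fin N) := Fin.nontrivial_iff_two_le.mpr hN
  obtain ⟨i, j, hij, hmax⟩ := exists_ne_forall_rowDist_le P
  rw [tau1_eq_of_forall_rowDist_le hmax]
  exact ⟨fun z hz => sum_abs_sum_mul_le hz hmax, exists_sum_abs_eq_one_sum_eq_zero P hij⟩

/-- The supremum of `‖zᵀP‖₁` over row vectors `z` with `‖z‖₁ = 1` and `Σᵢ zᵢ = 0`
equals `τ₁(P)`: the bound `‖zᵀP‖₁ ≤ τ₁(P)·‖z‖₁` holds for every `z` with zero sum,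
and is attained by some `z` with `‖z‖₁ = 1` and zero sum. -/
theorem tau1_is_sup {N : ℕ} (hN : 2 ≤ N) (P : Fin N → Fin N → ℝ)
    (hPnn : ∀ i k, 0 ≤ P i k) (hProw : ∀ i, ∑ k, P i k = 1) :
    (∀ z : Fin N → ℝ, ∑ i, z i = 0 →
      ∑ k, |∑ i, z i * P i k| ≤ tau1 P * ∑ i, |z i|) ∧
    (∃ z : Fin N → ℝ, (∑ i, |z i| = 1) ∧ (∑ i, z i = 0) ∧
      ∑ k, |∑ i, z i * P i k| = tau1 P) :=
  tau1_is_sup_general hN P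
end

section
/- Let P be a row-stochastic N×N real matrix. Then τ₁(P) < 1 if and only if P is scrambling, i.e. no two rows of P are orthogonal: for every pair of row indices i, j there exists a column k with P_{ik} > 0 and P_{jk} > 0. -/
open Finset

-- An empty `⨆` of reals is `0`, which is why `0 < a` is needed.
theorem Real.iSup_lt_iff_of_finite {ι : Type*} [Finite ι] {f : ι → ℝ} {a : ℝ} (ha : 0 < a) :
    ⨆ i, f i < a ↔ ∀ i, f i < a := by
  rcases isEmpty_or_nonempty ι with hι | hι
  · simp [ha]
  · refine ⟨fun h i ↦ (le_ciSup (Set.finite_range f).bddAbove i).trans_lt h, fun h ↦ ?_⟩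
    obtain ⟨i, hi⟩ := exists_eq_ciSup_of_finite (f := f)
    exact hi ▸ h i

theorem abs_sub_eq_add_sub_two_mul_min (a b : ℝ) : |a - b| = a + b - 2 * min a b := by
  linarith [max_sub_min_eq_abs' a b, min_add_max a b]

section ProbabilityVectors

variable {ι : Type*} [Fintype ι] {p q : ι → ℝ}

theorem sum_abs_sub_eq_two_sub_two_mul_sum_min (hp : ∑ k, p k = 1) (hq : ∑ k, q k = 1) :
    ∑ k, |p k - q k| = 2 - 2 * ∑ k, min (p k) (q k) := by
  simp only [abs_sub_eq_add_sub_two_mul_min, sum_sub_distrib, sum_add_distrib, hp, hq, ← mul_sum]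
  ring

theorem sum_min_pos_iff (hp : ∀ k, 0 ≤ p k) (hq : ∀ k, 0 ≤ q k) :
    0 < ∑ k, min (p k) (q k) ↔ ∃ k, 0 < p k ∧ 0 < q k := by
  simp [sum_pos_iff_of_nonneg fun k _ ↦ le_min (hp k) (hq k)]

theorem sum_abs_sub_lt_two_iff (hp : ∀ k, 0 ≤ p k) (hq : ∀ k, 0 ≤ q k)
    (hp₁ : ∑ k, p k = 1) (hq₁ : ∑ k, q k = 1) :
    ∑ k, |p k - q k| < 2 ↔ ∃ k, 0 < p k ∧ 0 < q k := by
  rw [sum_abs_sub_eq_two_sub_two_mul_sum_min hp₁ hq₁, ← sum_min_pos_iff hp hq]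
  constructor <;> intro h <;> linarith

end ProbabilityVectors

theorem tau1_lt_one_iff_scrambling_general {N : ℕ} (P : Fin N → Fin N → ℝ)
    (hPnn : ∀ i k, 0 ≤ P i k) (hProw : ∀ i, ∑ k, P i k = 1) :
    tau1 P < 1 ↔ ∀ i j : Fin N, ∃ k, 0 < P i k ∧ 0 < P j k := by
  have htau : tau1 P < 1 ↔ ⨆ i, ⨆ j, ∑ k, |P i k - P j k| < 2 := by
    rw [tau1]
    constructor <;> intro h <;> linarith
  simp only [htau, Real.iSup_lt_iff_of_finite two_pos,
    sum_abs_sub_lt_two_iff (hPnn _) (hPnn _) (hProw _) (hProw _)]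

/-- `τ₁(P) < 1` iff `P` is scrambling: no two rows are orthogonal. -/
theorem tau1_lt_one_iff_scrambling {N : ℕ} [NeZero N] (P : Fin N → Fin N → ℝ)
    (hPnn : ∀ i k, 0 ≤ P i k) (hProw : ∀ i, ∑ k, P i k = 1) :
    tau1 P < 1 ↔ ∀ i j : Fin N, ∃ k, 0 < P i k ∧ 0 < P j k :=
  tau1_lt_one_iff_scrambling_general P hPnn hProw
end

section
/- Let M be a finite MDP with N states and A actions, let ε ∈ (0,1], and let π be a Markov randomized policy with π_a(s) ≥ ε/A for all states s and actions a. Let P_E(s' | s) = Σ_a π_a(s)·P(s' | s, a) be the induced transition matrix, let w be a stationary distribution of P_E with smallest component w̲ = min_s w(s), and define θ = max_{s',s,a,b} |P(s' | s, a) − P(s' | s, b)|. Define G := 2·Σ_{s,a} π_a(s)·w(s)·Σ_{s' : P(s'|s,a) > 0} P(s' | s, a)·ln( P(s' | s, a) / P_E(s' | s) ) (every term with P(s' | s, a) = 0 contributes 0; note P_E(s' | s) > 0 whenever P(s' | s, a) > 0 since π_a(s) > 0). Then G ≥ (ε·θ² / (4A)) · w̲. -/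
/-!
Termwise, `p log (p / q) - (p - q) = q · klFun (p / q)` with `klFun x = x log x + 1 - x`, and
`klFun x ≥ (x - 1)² / (2 max x 1)`: below `1` this is `sinh (log x) ≤ log x`, above `1` it is the
first two terms of the series `-log (1 - u) = ∑ uⁿ / n` at `u = 1 - 1/x`. Summed over probability
vectors this gives `∑ p log (p / q) ≥ ½ ∑ (p - q)²`. Each row of `P_E` is a mixture of the rows
`P(· | s, a)`, and of the two actions realising `θ` one is at distance `≥ θ / 2` from `P_E(s' | s)`,
so its divergence from `P_E(· | s)` is at least `θ² / 8`; its weight in `G` is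
`π_c(s) w(s) ≥ (ε / A) w̲`.
-/

open Real Finset InformationTheory

lemma sq_sub_one_div_two_le_klFun {x : ℝ} (hx0 : 0 ≤ x) (hx1 : x ≤ 1) :
    (x - 1) ^ 2 / 2 ≤ klFun x := by
  rcases hx0.eq_or_lt with rfl | hx0
  · norm_num [klFun_zero]
  have hlog : (x - x⁻¹) / 2 ≤ log x := by
    rw [← sinh_log hx0]
    exact sinh_le_self_iff.mpr (log_nonpos hx0.le hx1)
  have : x * ((x - x⁻¹) / 2) = (x ^ 2 - 1) / 2 := by field_simp
  rw [klFun_apply]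
  nlinarith [mul_le_mul_of_nonneg_left hlog hx0.le]

lemma sq_sub_one_div_two_mul_le_klFun {x : ℝ} (hx : 1 ≤ x) :
    (x - 1) ^ 2 / (2 * x) ≤ klFun x := by
  have hx0 : 0 < x := one_pos.trans_le hx
  set u := 1 - x⁻¹ with hu
  have hu0 : 0 ≤ u := sub_nonneg.mpr (inv_le_one_of_one_le₀ hx)
  have hu1 : |u| < 1 := by
    rw [abs_of_nonneg hu0, hu, sub_lt_self_iff]
    exact inv_pos.mpr hx0
  have hseries : u + u ^ 2 / 2 ≤ log x := by
    have := sum_le_hasSum (range 2) (fun n _ => by positivity)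
      (hasSum_pow_div_log_of_abs_lt_one hu1)
    norm_num [hu, sum_range_succ, log_inv] at this
    exact this
  have hid : x * (u + u ^ 2 / 2) + 1 - x = (x - 1) ^ 2 / (2 * x) := by
    rw [hu]; field_simp; ring
  rw [klFun_apply]
  nlinarith [mul_le_mul_of_nonneg_left hseries hx0.le]

lemma mul_klFun_div {p q : ℝ} (hq : q ≠ 0) :
    q * klFun (p / q) = p * log (p / q) + q - p := by
  rw [klFun_apply]; field_simp

lemma sub_add_sq_sub_div_two_le_mul_log_div {p q : ℝ} (hp0 : 0 ≤ p) (hp1 : p ≤ 1)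
    (hq0 : 0 ≤ q) (hq1 : q ≤ 1) (hpq : q = 0 → p = 0) :
    p - q + (p - q) ^ 2 / 2 ≤ p * log (p / q) := by
  rcases hq0.eq_or_lt with rfl | hq0
  · simp [hpq rfl]
  have hkl := mul_klFun_div (p := p) hq0.ne'
  rcases le_total p q with hpq_le | hqp_le
  · have hbound := mul_le_mul_of_nonneg_left
      (sq_sub_one_div_two_le_klFun (div_nonneg hp0 hq0.le) ((div_le_one hq0).mpr hpq_le)) hq0.le
    have h : q * ((p / q - 1) ^ 2 / 2) = (p - q) ^ 2 / (2 * q) := by field_simp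
    have hq_le : (p - q) ^ 2 / 2 ≤ (p - q) ^ 2 / (2 * q) :=
      div_le_div_of_nonneg_left (sq_nonneg _) (by positivity) (by linarith)
    linarith
  · have hp0 := hq0.trans_le hqp_le
    have hbound := mul_le_mul_of_nonneg_left
      (sq_sub_one_div_two_mul_le_klFun ((one_le_div hq0).mpr hqp_le)) hq0.le
    have h : q * ((p / q - 1) ^ 2 / (2 * (p / q))) = (p - q) ^ 2 / (2 * p) := by field_simp
    have hp_le : (p - q) ^ 2 / 2 ≤ (p - q) ^ 2 / (2 * p) :=
      div_le_div_of_nonneg_left (sq_nonneg _) (by positivity) (by linarith)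
    linarith

theorem sum_sq_sub_div_two_le_sum_mul_log_div {ι : Type*} [Fintype ι] {p q : ι → ℝ}
    (hp0 : ∀ i, 0 ≤ p i) (hq0 : ∀ i, 0 ≤ q i) (hp1 : ∑ i, p i = 1) (hq1 : ∑ i, q i = 1)
    (hpq : ∀ i, q i = 0 → p i = 0) :
    ∑ i, (p i - q i) ^ 2 / 2 ≤ ∑ i, p i * log (p i / q i) := by
  have hle : ∀ {r : ι → ℝ}, (∀ i, 0 ≤ r i) → ∑ i, r i = 1 → ∀ i, r i ≤ 1 := fun hr0 hr1 i =>
    hr1 ▸ single_le_sum (fun j _ => hr0 j) (mem_univ i)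
  calc ∑ i, (p i - q i) ^ 2 / 2 = ∑ i, (p i - q i + (p i - q i) ^ 2 / 2) := by
        rw [sum_add_distrib, sum_sub_distrib, hp1, hq1, sub_self, zero_add]
    _ ≤ ∑ i, p i * log (p i / q i) := sum_le_sum fun i _ =>
        sub_add_sq_sub_div_two_le_mul_log_div (hp0 i) (hle hp0 hp1 i) (hq0 i) (hle hq0 hq1 i)
          (hpq i)

section Mixture

variable {α ι : Type*} [Fintype α] {μ : α → ℝ} {P : α → ι → ℝ}

lemma sum_sum_mul_eq_one [Fintype ι] (hμ : ∑ a, μ a = 1) (hP : ∀ a, ∑ i, P a i = 1) :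
    ∑ i, ∑ a, μ a * P a i = 1 := by
  rw [sum_comm]
  simp only [← mul_sum, hP, mul_one, hμ]

lemma eq_zero_of_sum_mul_eq_zero (hμ : ∀ a, 0 < μ a) (hP : ∀ a i, 0 ≤ P a i) {i : ι}
    (h : ∑ a, μ a * P a i = 0) (a : α) : P a i = 0 := by
  have hμP := (sum_eq_zero_iff_of_nonneg fun b _ => mul_nonneg (hμ b).le (hP b i)).mp h a
    (mem_univ a)
  exact (mul_eq_zero.mp hμP).resolve_left (hμ a).ne'

lemma sq_sub_sum_mul_div_two_le_sum_mul_log_div [Fintype ι] (hμ : ∀ a, 0 < μ a)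
    (hμ1 : ∑ a, μ a = 1) (hP : ∀ a i, 0 ≤ P a i) (hP1 : ∀ a, ∑ i, P a i = 1) (a : α) (i : ι) :
    (P a i - ∑ b, μ b * P b i) ^ 2 / 2 ≤ ∑ j, P a j * log (P a j / ∑ b, μ b * P b j) :=
  (single_le_sum (f := fun j => (P a j - ∑ b, μ b * P b j) ^ 2 / 2) (fun _ _ => by positivity)
    (mem_univ i)).trans <|
    sum_sq_sub_div_two_le_sum_mul_log_div (hP a)
      (fun j => sum_nonneg fun b _ => mul_nonneg (hμ b).le (hP b j)) (hP1 a)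
      (sum_sum_mul_eq_one hμ1 hP1) (fun _ h => eq_zero_of_sum_mul_eq_zero hμ hP h a)

end Mixture

lemma sq_sub_le_four_mul_sq_sub_or_sq_sub (x y z : ℝ) :
    (x - y) ^ 2 ≤ 4 * (x - z) ^ 2 ∨ (x - y) ^ 2 ≤ 4 * (y - z) ^ 2 := by
  have : (x - y) ^ 2 ≤ 2 * (x - z) ^ 2 + 2 * (y - z) ^ 2 := by
    nlinarith [sq_nonneg (x + y - 2 * z)]
  rcases le_total ((x - z) ^ 2) ((y - z) ^ 2) with h | h
  · exact Or.inr (by linarith)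
  · exact Or.inl (by linarith)

lemma exists_eq_ciSup₄_of_finite {α β γ δ : Type*} [Finite α] [Finite β] [Finite γ] [Finite δ]
    [Nonempty α] [Nonempty β] [Nonempty γ] [Nonempty δ] (f : α → β → γ → δ → ℝ) :
    ∃ a b c d, f a b c d = ⨆ a, ⨆ b, ⨆ c, ⨆ d, f a b c d := by
  obtain ⟨a, ha⟩ := exists_eq_ciSup_of_finite (f := fun a => ⨆ b, ⨆ c, ⨆ d, f a b c d)
  obtain ⟨b, hb⟩ := exists_eq_ciSup_of_finite (f := fun b => ⨆ c, ⨆ d, f a b c d)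
  obtain ⟨c, hc⟩ := exists_eq_ciSup_of_finite (f := fun c => ⨆ d, f a b c d)
  obtain ⟨d, hd⟩ := exists_eq_ciSup_of_finite (f := fun d => f a b c d)
  exact ⟨a, b, c, d, by rw [← ha, ← hb, ← hc, ← hd]⟩

theorem G_lower_bound_general {N A : ℕ} [NeZero N] [NeZero A]
    (P : Fin A → Fin N → Fin N → ℝ)
    (hPnn : ∀ a s s', 0 ≤ P a s s')
    (hProw : ∀ a s, ∑ s', P a s s' = 1)
    (ε : ℝ) (hε0 : 0 < ε)
    (pol : Fin N → Fin A → ℝ)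
    (hpolrow : ∀ s, ∑ a, pol s a = 1)
    (hexplore : ∀ s a, ε / A ≤ pol s a)
    (PE : Fin N → Fin N → ℝ)
    (hPE : ∀ s s', PE s s' = ∑ a, pol s a * P a s s')
    (w : Fin N → ℝ) (hwnn : ∀ s, 0 ≤ w s)
    (wlow : ℝ) (hwlow : wlow = ⨅ s, w s)
    (θ : ℝ) (hθ : θ = ⨆ s', ⨆ s, ⨆ a, ⨆ b, |P a s s' - P b s s'|)
    (G : ℝ)
    (hG : G = 2 * ∑ s, ∑ a, pol s a * w s *
      ∑ s', P a s s' * Real.log (P a s s' / PE s s')) :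
    ε * θ ^ 2 / (4 * A) * wlow ≤ G := by
  have hA : (0 : ℝ) < A := Nat.cast_pos.mpr (NeZero.pos A)
  have hpol : ∀ s a, 0 < pol s a := fun s a => (div_pos hε0 hA).trans_le (hexplore s a)
  have hKL : ∀ a s s', (P a s s' - PE s s') ^ 2 / 2 ≤ ∑ t, P a s t * log (P a s t / PE s t) := by
    intro a s s'
    simpa only [hPE] using sq_sub_sum_mul_div_two_le_sum_mul_log_div (hpol s) (hpolrow s)
      (fun a => hPnn a s) (fun a => hProw a s) a s'
  obtain ⟨s', s, a, b, hθab⟩ :=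
    exists_eq_ciSup₄_of_finite fun s' s a b => |P a s s' - P b s s'|
  obtain ⟨c, hc⟩ : ∃ c, θ ^ 2 / 8 ≤ ∑ t, P c s t * log (P c s t / PE s t) := by
    rw [hθ, ← hθab, sq_abs]
    rcases sq_sub_le_four_mul_sq_sub_or_sq_sub (P a s s') (P b s s') (PE s s') with h | h
    · exact ⟨a, by linarith [hKL a s s']⟩
    · exact ⟨b, by linarith [hKL b s s']⟩
  have hwlow0 : 0 ≤ wlow := hwlow ▸ le_ciInf hwnn
  have hwlows : wlow ≤ w s := hwlow ▸ ciInf_le (Finite.bddBelow_range w) s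
  have hterm : ∀ s a, 0 ≤ pol s a * w s * ∑ t, P a s t * log (P a s t / PE s t) := fun s a =>
    mul_nonneg (mul_nonneg (hpol s a).le (hwnn s))
      ((div_nonneg (sq_nonneg _) zero_le_two).trans (hKL a s s))
  calc ε * θ ^ 2 / (4 * A) * wlow = 2 * (ε / A * wlow * (θ ^ 2 / 8)) := by field_simp; ring
    _ ≤ 2 * (pol s c * w s * ∑ t, P c s t * log (P c s t / PE s t)) := by
        have hpolw : ε / A * wlow ≤ pol s c * w s :=
          mul_le_mul (hexplore s c) hwlows hwlow0 (hpol s c).le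
        gcongr
        exact mul_nonneg (hpol s c).le (hwnn s)
    _ ≤ G := by
        rw [hG]
        gcongr
        exact (single_le_sum (fun a _ => hterm s a) (mem_univ c)).trans
          (single_le_sum (fun s _ => sum_nonneg fun a _ => hterm s a) (mem_univ s))

/-- Lower bound on the expected log-likelihood-ratio rate `G`:
`G ≥ (ε·θ²/(4A))·w̲`. Terms with `P(s'|s,a) = 0` contribute `0` to the inner sum
(in Lean, `0 * Real.log 0 = 0`). -/
theorem G_lower_bound {N A : ℕ} [NeZero N] [NeZero A]
    (P : Fin A → Fin N → Fin N → ℝ)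
    (hPnn : ∀ a s s', 0 ≤ P a s s')
    (hProw : ∀ a s, ∑ s', P a s s' = 1)
    (ε : ℝ) (hε0 : 0 < ε) (hε1 : ε ≤ 1)
    (pol : Fin N → Fin A → ℝ)
    (hpolnn : ∀ s a, 0 ≤ pol s a) (hpolrow : ∀ s, ∑ a, pol s a = 1)
    (hexplore : ∀ s a, ε / A ≤ pol s a)
    (PE : Fin N → Fin N → ℝ)
    (hPE : ∀ s s', PE s s' = ∑ a, pol s a * P a s s')
    (w : Fin N → ℝ) (hwnn : ∀ s, 0 ≤ w s) (hwsum : ∑ s, w s = 1)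
    (hwstat : ∀ s', ∑ s, w s * PE s s' = w s')
    (wlow : ℝ) (hwlow : wlow = ⨅ s, w s)
    (θ : ℝ) (hθ : θ = ⨆ s', ⨆ s, ⨆ a, ⨆ b, |P a s s' - P b s s'|)
    (G : ℝ)
    (hG : G = 2 * ∑ s, ∑ a, pol s a * w s *
      ∑ s', P a s s' * Real.log (P a s s' / PE s s')) :
    ε * θ ^ 2 / (4 * A) * wlow ≤ G :=
  G_lower_bound_general P hPnn hProw ε hε0 pol hpolrow hexplore PE hPE w hwnn wlow hwlow θ hθ G hG
end

section
/- Let m : {1,…,N} × {1,…,N} → ℕ be transition counts, let n(s) = Σ_{s'} m(s', s), and suppose n(s) ≥ 1 for every s with some m(s', s) > 0. Then for every family p of probability vectors p(· | s) on {1,…,N} (i.e. p(s' | s) ≥ 0 and Σ_{s'} p(s' | s) = 1 for each s), the likelihood satisfies ∏_{s',s} p(s' | s)^{m(s',s)} ≤ ∏_{s',s : m(s',s) > 0} ( m(s', s)/n(s) )^{m(s',s)}, with the convention 0⁰ = 1. That is, the empirical transition frequencies m(s', s)/n(s) are maximum-likelihood estimates of the Markov chain transition probabilities. -/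
/-!
Column by column, this is Gibbs' inequality. With `n = ∑ᵢ mᵢ`, AM–GM with weights `mᵢ` applied
to `qᵢ / mᵢ` gives `∏ (qᵢ / mᵢ)^mᵢ ≤ ((∑_{mᵢ > 0} qᵢ) / n)^n ≤ (1 / n)^n`, and multiplying by
`∏ mᵢ^mᵢ` turns this into `∏ qᵢ^mᵢ ≤ ∏ (mᵢ / n)^mᵢ`.
-/

open Finset

namespace Real

variable {ι : Type*} (s : Finset ι)

theorem prod_pow_le_arith_mean_pow (m : ι → ℕ) (z : ι → ℝ) (hz : ∀ i ∈ s, 0 ≤ z i) :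
    ∏ i ∈ s, z i ^ m i ≤ ((∑ i ∈ s, m i * z i) / ∑ i ∈ s, m i) ^ ∑ i ∈ s, m i := by
  set n := ∑ i ∈ s, m i
  rcases Nat.eq_zero_or_pos n with hn0 | hnpos
  · have hm0 : ∀ i ∈ s, m i = 0 := sum_eq_zero_iff.mp hn0
    rw [hn0, pow_zero, prod_eq_one fun i hi => by rw [hm0 i hi, pow_zero]]
  have hnR : (n : ℝ) ≠ 0 := Nat.cast_ne_zero.mpr hnpos.ne'
  have hw1 : ∑ i ∈ s, (m i : ℝ) / n = 1 := by
    rw [← sum_div, ← Nat.cast_sum, div_self hnR]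
  have hamgm := geom_mean_le_arith_mean_weighted s (fun i => (m i : ℝ) / n) z
    (fun i _ => by positivity) hw1 hz
  have hmean : ∑ i ∈ s, (m i : ℝ) / n * z i = (∑ i ∈ s, m i * z i) / n := by
    rw [sum_div]
    exact sum_congr rfl fun i _ => div_mul_eq_mul_div _ _ _
  have hpow : (∏ i ∈ s, z i ^ ((m i : ℝ) / n)) ^ n = ∏ i ∈ s, z i ^ m i := by
    rw [← prod_pow]
    refine prod_congr rfl fun i hi => ?_
    rw [← rpow_natCast, ← rpow_mul (hz i hi), div_mul_cancel₀ _ hnR, rpow_natCast]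
  rw [← hpow, ← hmean]
  exact pow_le_pow_left₀ (prod_nonneg fun i hi => rpow_nonneg (hz i hi) _) hamgm n

theorem prod_pow_le_prod_div_sum_pow (m : ι → ℕ) (q : ι → ℝ) (hq : ∀ i ∈ s, 0 ≤ q i)
    (hq1 : ∑ i ∈ s, q i ≤ 1) :
    ∏ i ∈ s, q i ^ m i ≤ ∏ i ∈ s, ((m i : ℝ) / ((∑ j ∈ s, m j : ℕ) : ℝ)) ^ m i := by
  set n := ∑ j ∈ s, m j
  have hsplit : ∀ i, q i ^ m i = (q i / m i) ^ m i * (m i : ℝ) ^ m i := fun i => by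
    rcases eq_or_ne (m i) 0 with h | h
    · simp [h]
    · rw [← mul_pow, div_mul_cancel₀ _ (Nat.cast_ne_zero.mpr h)]
  have hmean : ∑ i ∈ s, (m i : ℝ) * (q i / m i) ≤ 1 := by
    refine le_trans (sum_le_sum fun i hi => ?_) hq1
    rcases eq_or_ne (m i : ℝ) 0 with h | h
    · simpa [h] using hq i hi
    · rw [mul_div_cancel₀ _ h]
  have hamgm : ∏ i ∈ s, (q i / m i) ^ m i ≤ (1 / n) ^ n := by
    have hz : ∀ i ∈ s, 0 ≤ q i / m i := fun i hi => div_nonneg (hq i hi) (Nat.cast_nonneg _)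
    refine (prod_pow_le_arith_mean_pow s m _ hz).trans ?_
    gcongr
    exact div_nonneg (sum_nonneg fun i hi => mul_nonneg (Nat.cast_nonneg _) (hz i hi))
      (Nat.cast_nonneg _)
  calc ∏ i ∈ s, q i ^ m i
      = (∏ i ∈ s, (q i / m i) ^ m i) * ∏ i ∈ s, (m i : ℝ) ^ m i := by
        rw [← prod_mul_distrib]; exact prod_congr rfl fun i _ => hsplit i
    _ ≤ (1 / n) ^ n * ∏ i ∈ s, (m i : ℝ) ^ m i := by gcongr
    _ = ∏ i ∈ s, ((m i : ℝ) / n) ^ m i := by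
        simp only [div_pow, prod_div_distrib, prod_pow_eq_pow_sum, one_pow]
        ring

end Real

theorem empirical_frequencies_are_MLE_general {N : ℕ}
    (m : Fin N → Fin N → ℕ)
    (n : Fin N → ℕ) (hn : ∀ s, n s = ∑ s', m s' s)
    (p : Fin N → Fin N → ℝ)
    (hpnn : ∀ s' s, 0 ≤ p s' s) (hprow : ∀ s, ∑ s', p s' s = 1) :
    ∏ s', ∏ s, p s' s ^ m s' s ≤
      ∏ s', ∏ s,
        (if 0 < m s' s then ((m s' s : ℝ) / (n s : ℝ)) ^ m s' s else 1) := by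
  have hite : ∀ s' s, (if 0 < m s' s then ((m s' s : ℝ) / (n s : ℝ)) ^ m s' s else 1) =
      ((m s' s : ℝ) / (n s : ℝ)) ^ m s' s := fun s' s => by
    split_ifs with h
    · rfl
    · rw [Nat.eq_zero_of_not_pos h, pow_zero]
  simp only [hite]
  rw [prod_comm, prod_comm (f := fun s' s => ((m s' s : ℝ) / (n s : ℝ)) ^ m s' s)]
  refine prod_le_prod (fun s _ => prod_nonneg fun s' _ => pow_nonneg (hpnn s' s) _)
    fun s _ => ?_
  rw [hn s]
  exact Real.prod_pow_le_prod_div_sum_pow univ (m · s) (p · s) (fun s' _ => hpnn s' s)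
    (hprow s).le

/-- The empirical transition frequencies `m(s',s)/n(s)` are maximum-likelihood
estimates of Markov chain transition probabilities: the likelihood of any
transition-probability family `p` is at most that of the empirical one
(with the convention `0⁰ = 1`). -/
theorem empirical_frequencies_are_MLE {N : ℕ}
    (m : Fin N → Fin N → ℕ)
    (n : Fin N → ℕ) (hn : ∀ s, n s = ∑ s', m s' s)
    (hpos : ∀ s, (∃ s', 0 < m s' s) → 1 ≤ n s)
    (p : Fin N → Fin N → ℝ)
    (hpnn : ∀ s' s, 0 ≤ p s' s) (hprow : ∀ s, ∑ s', p s' s = 1) :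
    ∏ s', ∏ s, p s' s ^ m s' s ≤
      ∏ s', ∏ s,
        (if 0 < m s' s then ((m s' s : ℝ) / (n s : ℝ)) ^ m s' s else 1) :=
  empirical_frequencies_are_MLE_general m n hn p hpnn hprow
end
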